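/- Let v ≡ 1 or 7 (mod 24), v ≥ 7, n = (v-1)/6. For every i with 0 ≤ i ≤ n there exists a cyclic three-fold triple system CTS(v,3) with fine structure (n - i, i): exactly n - i base blocks repeated twice and exactly i base blocks repeated three times. -/

import Mathlib

set_option maxHeartbeats 2000000


/-- The six differences `±x i, ±y i, ±(y i - x i)` of the base block `{0, x i, y i}`
in `ZMod v`. -/
def blockDiffs (v : ℕ) (x y : ℕ → ZMod v) (i : ℕ) : Fin 6 → ZMod v
  | 0 => x i
  | 1 => -x i
  | 2 => y i
  | 3 => -y i
  | 4 => y i - x i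
  | 5 => x i - y i


theorem blockDiffs0 (v : ℕ) (x y : ℕ → ZMod v) (j : ℕ) : blockDiffs v x y j 0 = x j := rfl
theorem blockDiffs1 (v : ℕ) (x y : ℕ → ZMod v) (j : ℕ) : blockDiffs v x y j 1 = -x j := rfl
theorem blockDiffs2 (v : ℕ) (x y : ℕ → ZMod v) (j : ℕ) : blockDiffs v x y j 2 = y j := rfl
theorem blockDiffs3 (v : ℕ) (x y : ℕ → ZMod v) (j : ℕ) : blockDiffs v x y j 3 = -y j := rfl
theorem blockDiffs4 (v : ℕ) (x y : ℕ → ZMod v) (j : ℕ) : blockDiffs v x y j 4 = y j - x j := rfl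
theorem blockDiffs5 (v : ℕ) (x y : ℕ → ZMod v) (j : ℕ) : blockDiffs v x y j 5 = x j - y j := rfl

def skA (m r : ℕ) : ℕ :=
  if r % 2 = 0 then (if r = 4*m then 4*m else 2*m - r/2)
  else if r = 4*m-1 then 2*m
  else if r = 2*m+1 then 6*m-2
  else if r = 1 then 7*m-1
  else if 2*m+1 < r then 4*m + (4*m-1-r)/2
  else 5*m-1 + (2*m-1-r)/2

def skB (m r : ℕ) : ℕ :=
  if r % 2 = 0 then 2*m+1 - r/2
  else if r = 4*m+1 then 2*m+1
  else if r = 1 then 5*m+2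
  else if r = 2*m-1 then 6*m+3
  else if 2*m-1 < r then 4*m+1 + (4*m+1-r)/2
  else 5*m+4 + (2*m-3-r)/2

def skS (n r : ℕ) : ℕ :=
  if n = 1 then 1
  else if n = 4 then (if r = 1 then 7 else if r = 2 then 2 else if r = 3 then 3 else 1)
  else (if r = 1 then 9 else if r = 2 then 2 else if r = 3 then 5 else if r = 4 then 3 else 1)

theorem skolem_exists (n : ℕ) (hn : 1 ≤ n) (h4 : n % 4 = 0 ∨ n % 4 = 1) :
    ∃ a : ℕ → ℕ,
      (∀ r, 1 ≤ r → r ≤ n → 1 ≤ a r ∧ a r + r ≤ 2*n) ∧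
      (∀ r s, 1 ≤ r → r ≤ n → 1 ≤ s → s ≤ n → a r = a s → r = s) ∧
      (∀ r s, 1 ≤ r → r ≤ n → 1 ≤ s → s ≤ n → a r + r = a s + s → r = s) ∧
      (∀ r s, 1 ≤ r → r ≤ n → 1 ≤ s → s ≤ n → a r ≠ a s + s) := by
  have key : n = 1 ∨ n = 4 ∨ n = 5 ∨ (∃ m, 2 ≤ m ∧ n = 4*m) ∨ (∃ m, 2 ≤ m ∧ n = 4*m+1) := by
    have h2 : n = 1 ∨ n = 4 ∨ n = 5 ∨ (2 ≤ n/4 ∧ n = 4*(n/4)) ∨ (2 ≤ n/4 ∧ n = 4*(n/4)+1) := by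
      omega
    rcases h2 with h|h|h|h|h
    · exact Or.inl h
    · exact Or.inr (Or.inl h)
    · exact Or.inr (Or.inr (Or.inl h))
    · exact Or.inr (Or.inr (Or.inr (Or.inl ⟨n/4, h⟩)))
    · exact Or.inr (Or.inr (Or.inr (Or.inr ⟨n/4, h⟩)))
  rcases key with h | h | h | ⟨m, hm, h⟩ | ⟨m, hm, h⟩
  · subst h
    refine ⟨skS 1, ?_, ?_, ?_, ?_⟩
    · intro r h1 h2; unfold skS; interval_cases r <;> simp
    · intro r s h1 h2 h3 h4 h5; omega
    · intro r s h1 h2 h3 h4 h5; omega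
    · intro r s h1 h2 h3 h4; unfold skS; interval_cases r <;> interval_cases s <;> simp
  · subst h
    refine ⟨skS 4, ?_, ?_, ?_, ?_⟩
    · intro r h1 h2; unfold skS; interval_cases r <;> simp
    · intro r s h1 h2 h3 h4; unfold skS; interval_cases r <;> interval_cases s <;> simp
    · intro r s h1 h2 h3 h4; unfold skS; interval_cases r <;> interval_cases s <;> simp
    · intro r s h1 h2 h3 h4; unfold skS; interval_cases r <;> interval_cases s <;> simp
  · subst h
    refine ⟨skS 5, ?_, ?_, ?_, ?_⟩
    · intro r h1 h2; unfold skS; interval_cases r <;> simp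
    · intro r s h1 h2 h3 h4; unfold skS; interval_cases r <;> interval_cases s <;> simp
    · intro r s h1 h2 h3 h4; unfold skS; interval_cases r <;> interval_cases s <;> simp
    · intro r s h1 h2 h3 h4; unfold skS; interval_cases r <;> interval_cases s <;> simp
  · subst h
    refine ⟨skA m, ?_, ?_, ?_, ?_⟩
    · intro r h1 h2; unfold skA; split_ifs <;> omega
    · intro r s h1 h2 h3 h4; unfold skA; split_ifs <;> omega
    · intro r s h1 h2 h3 h4; unfold skA; split_ifs <;> omega
    · intro r s h1 h2 h3 h4; unfold skA; split_ifs <;> omega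
  · subst h
    refine ⟨skB m, ?_, ?_, ?_, ?_⟩
    · intro r h1 h2; unfold skB; split_ifs <;> omega
    · intro r s h1 h2 h3 h4; unfold skB; split_ifs <;> omega
    · intro r s h1 h2 h3 h4; unfold skB; split_ifs <;> omega
    · intro r s h1 h2 h3 h4; unfold skB; split_ifs <;> omega

/-- Each value in `[1, 2n]` is hit exactly once by the Skolem pairs. -/
theorem pair_count (n : ℕ) (a : ℕ → ℕ)
    (hrange : ∀ r, 1 ≤ r → r ≤ n → 1 ≤ a r ∧ a r + r ≤ 2*n)
    (hinj1 : ∀ r s, 1 ≤ r → r ≤ n → 1 ≤ s → s ≤ n → a r = a s → r = s)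
    (hinj2 : ∀ r s, 1 ≤ r → r ≤ n → 1 ≤ s → s ≤ n → a r + r = a s + s → r = s)
    (hdisj : ∀ r s, 1 ≤ r → r ≤ n → 1 ≤ s → s ≤ n → a r ≠ a s + s)
    (E : ℕ) (hE1 : 1 ≤ E) (hE2 : E ≤ 2*n) :
    ∑ r ∈ Finset.Ioc 0 n, ((if a r = E then 1 else 0) + (if a r + r = E then 1 else 0)) = 1 := by
  classical
  set S1 := (Finset.Ioc 0 n).image a with hS1
  set S2 := (Finset.Ioc 0 n).image (fun r => a r + r) with hS2
  have hc1 : S1.card = n := by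
    rw [hS1, Finset.card_image_of_injOn, Nat.card_Ioc]
    · omega
    · intro r hr s hs h
      simp only [Finset.coe_Ioc, Set.mem_Ioc] at hr hs
      exact hinj1 r s (by omega) hr.2 (by omega) hs.2 h
  have hc2 : S2.card = n := by
    rw [hS2, Finset.card_image_of_injOn, Nat.card_Ioc]
    · omega
    · intro r hr s hs h
      simp only [Finset.coe_Ioc, Set.mem_Ioc] at hr hs
      exact hinj2 r s (by omega) hr.2 (by omega) hs.2 h
  have hdis : Disjoint S1 S2 := by
    rw [Finset.disjoint_left]
    intro x hx1 hx2
    rw [hS1, Finset.mem_image] at hx1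
    rw [hS2, Finset.mem_image] at hx2
    obtain ⟨r, hr, hr2⟩ := hx1
    obtain ⟨s, hs, hs2⟩ := hx2
    simp only [Finset.mem_Ioc] at hr hs
    exact hdisj r s (by omega) hr.2 (by omega) hs.2 (by omega)
  have hsub : S1 ∪ S2 ⊆ Finset.Ioc 0 (2*n) := by
    intro x hx
    rw [Finset.mem_union] at hx
    simp only [Finset.mem_Ioc]
    rcases hx with hx | hx
    · rw [hS1, Finset.mem_image] at hx
      obtain ⟨r, hr, hr2⟩ := hx
      simp only [Finset.mem_Ioc] at hr
      have := hrange r (by omega) hr.2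
      omega
    · rw [hS2, Finset.mem_image] at hx
      obtain ⟨r, hr, hr2⟩ := hx
      simp only [Finset.mem_Ioc] at hr
      have := hrange r (by omega) hr.2
      omega
  have hEq : S1 ∪ S2 = Finset.Ioc 0 (2*n) := by
    apply Finset.eq_of_subset_of_card_le hsub
    rw [Finset.card_union_of_disjoint hdis, hc1, hc2, Nat.card_Ioc]
    omega
  have hE : E ∈ S1 ∪ S2 := by rw [hEq]; simp only [Finset.mem_Ioc]; omega
  rw [Finset.mem_union] at hE
  rcases hE with hE | hE
  · obtain ⟨r0, hr0, ha0⟩ := Finset.mem_image.1 hE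
    simp only [Finset.mem_Ioc] at hr0
    have hcongr : ∀ r ∈ Finset.Ioc 0 n,
        ((if a r = E then 1 else 0) + (if a r + r = E then 1 else 0)) =
        (if r = r0 then 1 else 0) := by
      intro r hr
      simp only [Finset.mem_Ioc] at hr
      have h2 : a r + r ≠ E := by
        intro h
        exact Finset.disjoint_left.1 hdis hE
          (Finset.mem_image.2 ⟨r, Finset.mem_Ioc.2 ⟨hr.1, hr.2⟩, h⟩)
      have e1 : (a r = E) ↔ (r = r0) := by
        constructor
        · intro h
          exact hinj1 r r0 (by omega) hr.2 (by omega) hr0.2 (by omega)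
        · intro h; subst h; omega
      rw [if_congr e1 rfl rfl, if_neg h2, add_zero]
    rw [Finset.sum_congr rfl hcongr,
      Finset.sum_ite_eq' (Finset.Ioc 0 n) r0 (fun _ => 1),
      if_pos (Finset.mem_Ioc.2 ⟨hr0.1, hr0.2⟩)]
  · obtain ⟨r0, hr0, ha0⟩ := Finset.mem_image.1 hE
    simp only [Finset.mem_Ioc] at hr0 ha0
    have hcongr : ∀ r ∈ Finset.Ioc 0 n,
        ((if a r = E then 1 else 0) + (if a r + r = E then 1 else 0)) =
        (if r = r0 then 1 else 0) := by
      intro r hr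
      simp only [Finset.mem_Ioc] at hr
      have h2 : a r ≠ E := by
        intro h
        exact Finset.disjoint_left.1 hdis
          (Finset.mem_image.2 ⟨r, Finset.mem_Ioc.2 ⟨hr.1, hr.2⟩, h⟩) hE
      have e1 : (a r + r = E) ↔ (r = r0) := by
        constructor
        · intro h
          exact hinj2 r r0 (by omega) hr.2 (by omega) hr0.2 (by omega)
        · intro h; subst h; omega
      rw [if_congr e1 rfl rfl, if_neg h2, zero_add]
    rw [Finset.sum_congr rfl hcongr,
      Finset.sum_ite_eq' (Finset.Ioc 0 n) r0 (fun _ => 1),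
      if_pos (Finset.mem_Ioc.2 ⟨hr0.1, hr0.2⟩)]

def rrF (n j : ℕ) : ℕ := if j ≤ 2*n then (if j ≤ n then j else j - n) else j - 2*n

def XF (n i : ℕ) (a : ℕ → ℕ) (j : ℕ) : ℕ :=
  if j ≤ 2*n + i then rrF n j else n + a (rrF n j)

def YF (n : ℕ) (a : ℕ → ℕ) (j : ℕ) : ℕ := n + a (rrF n j) + rrF n j

def BF (v n i : ℕ) (a : ℕ → ℕ) (j : ℕ) : Finset (ZMod v) :=
  {0, ((XF n i a j : ℕ) : ZMod v), ((YF n a j : ℕ) : ZMod v)}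

/-- For `v ≡ 1, 7 (mod 24)`, `v ≥ 7`, `n = (v-1)/6` and `0 ≤ i ≤ n`, there is a
cyclic three-fold triple system `CTS(v,3)` (given by `3n` base blocks `{0, x j, y j}`
whose differences cover each nonzero residue exactly three times) with fine structure
`(n - i, i)`: exactly `n - i` base blocks repeated twice and exactly `i` repeated
three times. -/
theorem cts3_fine_structure_exists (v n i : ℕ)
    (hv : v % 24 = 1 ∨ v % 24 = 7) (hv7 : 7 ≤ v) (hn : v = 6 * n + 1)
    (hi : i ≤ n) :
    ∃ x y : ℕ → ZMod v,
      (∀ j ∈ Finset.Icc 1 (3 * n), x j ≠ 0 ∧ y j ≠ 0 ∧ x j ≠ y j) ∧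
      (∀ d : ZMod v, d ≠ 0 →
        (((Finset.Icc 1 (3 * n)) ×ˢ (Finset.univ : Finset (Fin 6))).filter
          (fun p => blockDiffs v x y p.1 p.2 = d)).card = 3) ∧
      (((Finset.Icc 1 (3 * n)).image
          (fun j => ({0, x j, y j} : Finset (ZMod v)))).filter
        (fun B => ((Finset.Icc 1 (3 * n)).filter
          (fun j => ({0, x j, y j} : Finset (ZMod v)) = B)).card = 2)).card = n - i ∧
      (((Finset.Icc 1 (3 * n)).image
          (fun j => ({0, x j, y j} : Finset (ZMod v)))).filter
        (fun B => ((Finset.Icc 1 (3 * n)).filter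
          (fun j => ({0, x j, y j} : Finset (ZMod v)) = B)).card = 3)).card = i := by
  classical
  haveI : NeZero v := ⟨by omega⟩
  have hn1 : 1 ≤ n := by omega
  have h4 : n % 4 = 0 ∨ n % 4 = 1 := by omega
  obtain ⟨a, hrange, hinj1, hinj2, hdisj⟩ := skolem_exists n hn1 h4
  -- basic cast lemmas
  have hceq : ∀ c c' : ℕ, c ≤ 6*n → c' ≤ 6*n → (((c : ZMod v) = (c' : ZMod v)) ↔ c = c') := by
    intro c c' h h'
    constructor
    · intro h2
      have h3 := congrArg ZMod.val h2
      rwa [ZMod.val_cast_of_lt (by omega), ZMod.val_cast_of_lt (by omega)] at h3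
    · rintro rfl; rfl
  have hc0 : ∀ c : ℕ, 1 ≤ c → c ≤ 6*n → (c : ZMod v) ≠ 0 := by
    intro c h1 h2 h3
    have h4 : ((c : ZMod v) = ((0 : ℕ) : ZMod v)) := by rw [h3]; simp
    rw [hceq c 0 h2 (by omega)] at h4
    omega
  -- bounds on rrF, XF, YF
  have hrr : ∀ j, 1 ≤ j → j ≤ 3*n → 1 ≤ rrF n j ∧ rrF n j ≤ n := by
    intro j h1 h2; unfold rrF; split_ifs <;> omega
  have hXYb : ∀ j, 1 ≤ j → j ≤ 3*n →
      1 ≤ XF n i a j ∧ XF n i a j < YF n a j ∧ YF n a j ≤ 3*n := by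
    intro j h1 h2
    obtain ⟨hr1, hr2⟩ := hrr j h1 h2
    obtain ⟨ha1, ha2⟩ := hrange (rrF n j) hr1 hr2
    unfold XF YF; split_ifs <;> omega
  have hrr3 : ∀ r, 1 ≤ r → r ≤ n → rrF n r = r ∧ rrF n (r+n) = r ∧ rrF n (r+2*n) = r := by
    intro r h1 h2
    refine ⟨?_, ?_, ?_⟩ <;> (unfold rrF; split_ifs <;> omega)
  have hXc : ∀ r, 1 ≤ r → r ≤ n →
      XF n i a r = r ∧ XF n i a (r+n) = r ∧ YF n a r = n + a r + r ∧
      YF n a (r+n) = n + a r + r ∧ YF n a (r+2*n) = n + a r + r := by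
    intro r h1 h2
    obtain ⟨e1, e2, e3⟩ := hrr3 r h1 h2
    refine ⟨?_, ?_, ?_, ?_, ?_⟩
    · unfold XF; rw [if_pos (by omega), e1]
    · unfold XF; rw [if_pos (by omega), e2]
    · unfold YF; rw [e1]
    · unfold YF; rw [e2]
    · unfold YF; rw [e3]
  have hXc3p : ∀ r, 1 ≤ r → r ≤ n → r ≤ i → XF n i a (r+2*n) = r := by
    intro r h1 h2 h3
    obtain ⟨e1, e2, e3⟩ := hrr3 r h1 h2
    unfold XF; rw [if_pos (by omega), e3]
  have hXc3q : ∀ r, 1 ≤ r → r ≤ n → i < r → XF n i a (r+2*n) = n + a r := by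
    intro r h1 h2 h3
    obtain ⟨e1, e2, e3⟩ := hrr3 r h1 h2
    unfold XF; rw [if_neg (by omega), e3]
  have hBeq : ∀ j k, 1 ≤ j → j ≤ 3*n → 1 ≤ k → k ≤ 3*n →
      (BF v n i a j = BF v n i a k ↔ (XF n i a j = XF n i a k ∧ YF n a j = YF n a k)) := by
    intro j k hj1 hj2 hk1 hk2
    obtain ⟨hbj1, hbj2, hbj3⟩ := hXYb j hj1 hj2
    obtain ⟨hbk1, hbk2, hbk3⟩ := hXYb k hk1 hk2
    unfold BF
    constructor
    · intro h
      have hx : ((XF n i a j : ℕ) : ZMod v) ∈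
          ({0, ((XF n i a k : ℕ) : ZMod v), ((YF n a k : ℕ) : ZMod v)} : Finset (ZMod v)) := by
        rw [← h]; simp
      have hy : ((YF n a j : ℕ) : ZMod v) ∈
          ({0, ((XF n i a k : ℕ) : ZMod v), ((YF n a k : ℕ) : ZMod v)} : Finset (ZMod v)) := by
        rw [← h]; simp
      simp only [Finset.mem_insert, Finset.mem_singleton] at hx hy
      have hx' : XF n i a j = XF n i a k ∨ XF n i a j = YF n a k := by
        rcases hx with h0 | h0 | h0
        · exact absurd h0 (hc0 _ hbj1 (by omega))
        · exact Or.inl ((hceq _ _ (by omega) (by omega)).1 h0)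
        · exact Or.inr ((hceq _ _ (by omega) (by omega)).1 h0)
      have hy' : YF n a j = XF n i a k ∨ YF n a j = YF n a k := by
        rcases hy with h0 | h0 | h0
        · exact absurd h0 (hc0 _ (by omega) (by omega))
        · exact Or.inl ((hceq _ _ (by omega) (by omega)).1 h0)
        · exact Or.inr ((hceq _ _ (by omega) (by omega)).1 h0)
      constructor <;> omega
    · rintro ⟨h1, h2⟩; rw [h1, h2]
  have hchar : ∀ j r, 1 ≤ j → j ≤ 3*n → 1 ≤ r → r ≤ n →
      ((XF n i a j = XF n i a r ∧ YF n a j = YF n a r) ↔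
        (j = r ∨ j = r + n ∨ (j = r + 2*n ∧ r ≤ i))) := by
    intro j r hj1 hj2 hr1 hr2
    obtain ⟨hρ1, hρ2⟩ := hrr j hj1 hj2
    have haρ := hrange _ hρ1 hρ2
    have har := hrange _ hr1 hr2
    have hcr := hXc r hr1 hr2
    constructor
    · rintro ⟨h1, h2⟩
      rw [hcr.1] at h1
      rw [hcr.2.2.1] at h2
      have hρr : rrF n j = r := by
        refine hinj2 _ _ hρ1 hρ2 hr1 hr2 ?_
        unfold YF at h2; omega
      unfold XF at h1
      split_ifs at h1 with hc
      · unfold rrF at hρr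
        split_ifs at hρr <;> omega
      · rw [hρr] at h1; omega
    · intro h
      rcases h with h | h | ⟨h, hri⟩
      · subst h; exact ⟨rfl, rfl⟩
      · subst h; exact ⟨hcr.2.1.trans hcr.1.symm, hcr.2.2.2.1.trans hcr.2.2.1.symm⟩
      · subst h
        exact ⟨(hXc3p r hr1 hr2 hri).trans hcr.1.symm, hcr.2.2.2.2.trans hcr.2.2.1.symm⟩
  have hcharq : ∀ j r, 1 ≤ j → j ≤ 3*n → 1 ≤ r → r ≤ n → i < r →
      ((XF n i a j = XF n i a (r+2*n) ∧ YF n a j = YF n a (r+2*n)) ↔ j = r + 2*n) := by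
    intro j r hj1 hj2 hr1 hr2 hri
    obtain ⟨hρ1, hρ2⟩ := hrr j hj1 hj2
    have haρ := hrange _ hρ1 hρ2
    have har := hrange _ hr1 hr2
    have hcr := hXc r hr1 hr2
    have hq := hXc3q r hr1 hr2 hri
    constructor
    · rintro ⟨h1, h2⟩
      rw [hq] at h1
      rw [hcr.2.2.2.2] at h2
      have hρr : rrF n j = r := by
        refine hinj2 _ _ hρ1 hρ2 hr1 hr2 ?_
        unfold YF at h2; omega
      unfold XF at h1
      split_ifs at h1 with hc
      · rw [hρr] at h1; omega
      · unfold rrF at hρr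
        split_ifs at hρr <;> omega
    · intro h; subst h; exact ⟨rfl, rfl⟩
  have hfibP : ∀ r, 1 ≤ r → r ≤ n →
      (Finset.Icc 1 (3*n)).filter (fun j => BF v n i a j = BF v n i a r) =
        (if r ≤ i then ({r, r+n, r+2*n} : Finset ℕ) else {r, r+n}) := by
    intro r hr1 hr2
    ext j
    simp only [Finset.mem_filter, Finset.mem_Icc]
    constructor
    · rintro ⟨⟨hj1, hj2⟩, heq⟩
      rw [hBeq j r hj1 hj2 (by omega) (by omega), hchar j r hj1 hj2 hr1 hr2] at heq
      split_ifs with hri <;> simp only [Finset.mem_insert, Finset.mem_singleton] <;> omega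
    · intro hj
      split_ifs at hj with hri <;>
        simp only [Finset.mem_insert, Finset.mem_singleton] at hj
      · refine ⟨by omega, ?_⟩
        rw [hBeq j r (by omega) (by omega) (by omega) (by omega),
          hchar j r (by omega) (by omega) hr1 hr2]
        omega
      · refine ⟨by omega, ?_⟩
        rw [hBeq j r (by omega) (by omega) (by omega) (by omega),
          hchar j r (by omega) (by omega) hr1 hr2]
        omega
  have hfibQ : ∀ r, 1 ≤ r → r ≤ n → i < r →
      (Finset.Icc 1 (3*n)).filter (fun j => BF v n i a j = BF v n i a (r+2*n)) =
        ({r+2*n} : Finset ℕ) := by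
    intro r hr1 hr2 hri
    ext j
    simp only [Finset.mem_filter, Finset.mem_Icc, Finset.mem_singleton]
    constructor
    · rintro ⟨⟨hj1, hj2⟩, heq⟩
      rw [hBeq j (r+2*n) hj1 hj2 (by omega) (by omega),
        hcharq j r hj1 hj2 hr1 hr2 hri] at heq
      exact heq
    · intro hj
      refine ⟨by omega, ?_⟩
      rw [hBeq j (r+2*n) (by omega) (by omega) (by omega) (by omega),
        hcharq j r (by omega) (by omega) hr1 hr2 hri]
      exact hj
  have hcard3 : ∀ r, 1 ≤ r → r ≤ n →
      ((Finset.Icc 1 (3*n)).filter (fun j => BF v n i a j = BF v n i a r)).card =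
        (if r ≤ i then 3 else 2) := by
    intro r h1 h2
    rw [hfibP r h1 h2]
    split_ifs with h
    · rw [Finset.card_insert_of_notMem (by simp; omega),
        Finset.card_insert_of_notMem (by simp; omega), Finset.card_singleton]
    · rw [Finset.card_insert_of_notMem (by simp; omega), Finset.card_singleton]
  have hcard1 : ∀ r, 1 ≤ r → r ≤ n → i < r →
      ((Finset.Icc 1 (3*n)).filter (fun j => BF v n i a j = BF v n i a (r+2*n))).card = 1 := by
    intro r h1 h2 h3
    rw [hfibQ r h1 h2 h3, Finset.card_singleton]
  have hmain3 :
      ((Finset.Icc 1 (3*n)).image (fun j => BF v n i a j)).filter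
        (fun B => ((Finset.Icc 1 (3*n)).filter (fun j => BF v n i a j = B)).card = 3) =
      (Finset.Icc 1 i).image (fun j => BF v n i a j) := by
    ext b
    simp only [Finset.mem_filter, Finset.mem_image, Finset.mem_Icc]
    constructor
    · rintro ⟨⟨j, ⟨hj1, hj2⟩, rfl⟩, hcardb⟩
      have hρ := hrr j hj1 hj2
      by_cases hcnd : j ≤ 2*n + i
      · have hBj : BF v n i a j = BF v n i a (rrF n j) := by
          rw [hBeq j (rrF n j) hj1 hj2 (by omega) (by omega),
            hchar j (rrF n j) hj1 hj2 (by omega) (by omega)]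
          unfold rrF
          split_ifs <;> omega
        rw [hBj, hcard3 (rrF n j) (by omega) (by omega)] at hcardb
        refine ⟨rrF n j, ⟨by omega, ?_⟩, hBj.symm⟩
        split_ifs at hcardb with h <;> omega
      · have hj2n : j = (rrF n j) + 2*n := by unfold rrF; split_ifs <;> omega
        have hρi : i < rrF n j := by omega
        have hcard1' := hcard1 (rrF n j) (by omega) (by omega) hρi
        rw [← hj2n] at hcard1'
        omega
    · rintro ⟨r, ⟨hr1, hr2⟩, rfl⟩
      refine ⟨⟨r, ⟨hr1, by omega⟩, rfl⟩, ?_⟩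
      rw [hcard3 r (by omega) (by omega), if_pos hr2]
  have hmain2 :
      ((Finset.Icc 1 (3*n)).image (fun j => BF v n i a j)).filter
        (fun B => ((Finset.Icc 1 (3*n)).filter (fun j => BF v n i a j = B)).card = 2) =
      (Finset.Icc (i+1) n).image (fun j => BF v n i a j) := by
    ext b
    simp only [Finset.mem_filter, Finset.mem_image, Finset.mem_Icc]
    constructor
    · rintro ⟨⟨j, ⟨hj1, hj2⟩, rfl⟩, hcardb⟩
      have hρ := hrr j hj1 hj2
      by_cases hcnd : j ≤ 2*n + i
      · have hBj : BF v n i a j = BF v n i a (rrF n j) := by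
          rw [hBeq j (rrF n j) hj1 hj2 (by omega) (by omega),
            hchar j (rrF n j) hj1 hj2 (by omega) (by omega)]
          unfold rrF
          split_ifs <;> omega
        rw [hBj, hcard3 (rrF n j) (by omega) (by omega)] at hcardb
        refine ⟨rrF n j, ⟨?_, by omega⟩, hBj.symm⟩
        split_ifs at hcardb with h <;> omega
      · have hj2n : j = (rrF n j) + 2*n := by unfold rrF; split_ifs <;> omega
        have hρi : i < rrF n j := by omega
        have hcard1' := hcard1 (rrF n j) (by omega) (by omega) hρi
        rw [← hj2n] at hcard1'
        omega
    · rintro ⟨r, ⟨hr1, hr2⟩, rfl⟩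
      refine ⟨⟨r, ⟨by omega, by omega⟩, rfl⟩, ?_⟩
      rw [hcard3 r (by omega) (by omega), if_neg (by omega)]
  have hinjBF : ∀ s t : ℕ, 1 ≤ s → s ≤ n → 1 ≤ t → t ≤ n →
      BF v n i a s = BF v n i a t → s = t := by
    intro s t h1 h2 h3 h4 h
    rw [hBeq s t (by omega) (by omega) (by omega) (by omega)] at h
    have hcs := hXc s h1 h2
    have hct := hXc t h3 h4
    omega
  refine ⟨fun j => ((XF n i a j : ℕ) : ZMod v), fun j => ((YF n a j : ℕ) : ZMod v),
    ?_, ?_, ?_, ?_⟩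
  · -- nonzero and distinct
    intro j hj
    rw [Finset.mem_Icc] at hj
    obtain ⟨h1, h2, h3⟩ := hXYb j hj.1 hj.2
    refine ⟨hc0 _ h1 (by omega), hc0 _ (by omega) (by omega), ?_⟩
    intro h
    rw [hceq _ _ (by omega) (by omega)] at h
    omega
  · -- difference count
    intro d hd
    have hdlt : d.val < v := ZMod.val_lt d
    have hd1 : 1 ≤ d.val := by
      rcases Nat.eq_zero_or_pos d.val with h | h
      · exact absurd ((ZMod.val_eq_zero d).1 h) hd
      · omega
    set D : ℕ := if d.val ≤ 3*n then d.val else v - d.val with hD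
    have hD1 : 1 ≤ D ∧ D ≤ 3*n := by rw [hD]; split_ifs <;> omega
    have hpm : ∀ c : ℕ, 1 ≤ c → c ≤ 3*n →
        ((if ((c : ZMod v)) = d then 1 else 0) + (if (-(c : ZMod v)) = d then 1 else 0) : ℕ)
          = if c = D then 1 else 0 := by
      intro c h1 h2
      have hcv : ((c : ZMod v)).val = c := ZMod.val_cast_of_lt (by omega)
      have hcne : (c : ZMod v) ≠ 0 := hc0 c h1 (by omega)
      have e1 : ((c : ZMod v) = d) ↔ c = d.val := by
        constructor
        · intro h; rw [← hcv, h]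
        · intro h; exact ZMod.val_injective v (by rw [hcv]; exact h)
      have e2 : (-(c : ZMod v) = d) ↔ c = v - d.val := by
        constructor
        · intro h
          have h3 := congrArg ZMod.val h
          rw [ZMod.neg_val, if_neg hcne, hcv] at h3
          omega
        · intro h
          refine ZMod.val_injective v ?_
          rw [ZMod.neg_val, if_neg hcne, hcv]
          omega
      rw [if_congr e1 rfl rfl, if_congr e2 rfl rfl, hD]
      split_ifs <;> omega
    set F : ℕ → ℕ := fun j => ((if XF n i a j = D then 1 else 0) +
        (if YF n a j = D then 1 else 0) +
        (if YF n a j - XF n i a j = D then 1 else 0)) with hF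
    have hinner : ∀ j ∈ Finset.Icc 1 (3*n),
        (∑ k : Fin 6, if blockDiffs v (fun j => ((XF n i a j : ℕ) : ZMod v))
            (fun j => ((YF n a j : ℕ) : ZMod v)) j k = d then (1:ℕ) else 0) = F j := by
      intro j hj
      rw [Finset.mem_Icc] at hj
      obtain ⟨hb1, hb2, hb3⟩ := hXYb j hj.1 hj.2
      rw [Fin.sum_univ_six]
      simp only [blockDiffs0, blockDiffs1, blockDiffs2, blockDiffs3, blockDiffs4, blockDiffs5]
      have hsub : ((YF n a j : ℕ) : ZMod v) - ((XF n i a j : ℕ) : ZMod v)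
          = ((YF n a j - XF n i a j : ℕ) : ZMod v) := (Nat.cast_sub (le_of_lt hb2)).symm
      have hsub2 : ((XF n i a j : ℕ) : ZMod v) - ((YF n a j : ℕ) : ZMod v)
          = -(((YF n a j - XF n i a j : ℕ) : ZMod v)) := by rw [← hsub]; ring
      have p1 := hpm (XF n i a j) hb1 (by omega)
      have p2 := hpm (YF n a j) (by omega) hb3
      have p3 := hpm (YF n a j - XF n i a j) (by omega) (by omega)
      simp only [hF, hsub, hsub2]
      rw [← p1, ← p2, ← p3]
      ac_rfl
    rw [Finset.card_filter, Finset.sum_product]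
    rw [Finset.sum_congr rfl hinner]
    have hIoc : Finset.Icc 1 (3*n) = Finset.Ioc 0 (3*n) := by rw [← Finset.Icc_add_one_left_eq_Ioc]; rfl
    rw [hIoc]
    rw [← Finset.sum_Ioc_consecutive _ (by omega : (0:ℕ) ≤ 2*n) (by omega : 2*n ≤ 3*n)]
    rw [← Finset.sum_Ioc_consecutive _ (by omega : (0:ℕ) ≤ n) (by omega : n ≤ 2*n)]
    have hre1 : ∑ j ∈ Finset.Ioc n (2*n), F j = ∑ r ∈ Finset.Ioc 0 n, F (r + n) := by
      refine Finset.sum_nbij' (fun j => j - n) (fun r => r + n) ?_ ?_ ?_ ?_ ?_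
      · intro x hx; simp only [Finset.mem_Ioc] at *; omega
      · intro x hx; simp only [Finset.mem_Ioc] at *; omega
      · intro x hx; simp only [Finset.mem_Ioc] at *; omega
      · intro x hx; simp only [Finset.mem_Ioc] at *; omega
      · intro x hx; simp only [Finset.mem_Ioc] at hx
        rw [show x - n + n = x by omega]
    have hre2 : ∑ j ∈ Finset.Ioc (2*n) (3*n), F j = ∑ r ∈ Finset.Ioc 0 n, F (r + 2*n) := by
      refine Finset.sum_nbij' (fun j => j - 2*n) (fun r => r + 2*n) ?_ ?_ ?_ ?_ ?_
      · intro x hx; simp only [Finset.mem_Ioc] at *; omega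
      · intro x hx; simp only [Finset.mem_Ioc] at *; omega
      · intro x hx; simp only [Finset.mem_Ioc] at *; omega
      · intro x hx; simp only [Finset.mem_Ioc] at *; omega
      · intro x hx; simp only [Finset.mem_Ioc] at hx
        rw [show x - 2*n + 2*n = x by omega]
    rw [hre1, hre2, ← Finset.sum_add_distrib, ← Finset.sum_add_distrib]
    have hpt : ∀ r ∈ Finset.Ioc 0 n, F r + F (r + n) + F (r + 2*n) =
        3 * ((if r = D then 1 else 0) + (if n + a r = D then 1 else 0) +
             (if n + a r + r = D then 1 else 0)) := by
      intro r hr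
      rw [Finset.mem_Ioc] at hr
      obtain ⟨e1, e2, e3⟩ := hrr3 r (by omega) hr.2
      have ha := hrange r (by omega) hr.2
      have hX1 : XF n i a r = r := by unfold XF; rw [if_pos (by omega), e1]
      have hX2 : XF n i a (r + n) = r := by unfold XF; rw [if_pos (by omega), e2]
      have hY1 : YF n a r = n + a r + r := by unfold YF; rw [e1]
      have hY2 : YF n a (r + n) = n + a r + r := by unfold YF; rw [e2]
      have hY3 : YF n a (r + 2*n) = n + a r + r := by unfold YF; rw [e3]
      simp only [hF]
      rcases le_or_gt (r + 2*n) (2*n + i) with hc | hc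
      · have hX3 : XF n i a (r + 2*n) = r := by unfold XF; rw [if_pos hc, e3]
        rw [hX1, hX2, hX3, hY1, hY2, hY3, Nat.add_sub_cancel]
        ring
      · have hX3 : XF n i a (r + 2*n) = n + a r := by unfold XF; rw [if_neg (by omega), e3]
        rw [hX1, hX2, hX3, hY1, hY2, hY3, Nat.add_sub_cancel, Nat.add_sub_cancel_left]
        ring
    rw [Finset.sum_congr rfl hpt, ← Finset.mul_sum]
    have hsum1 : ∑ r ∈ Finset.Ioc 0 n, ((if r = D then 1 else 0) +
        (if n + a r = D then 1 else 0) + (if n + a r + r = D then (1:ℕ) else 0)) = 1 := by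
      rcases le_or_gt D n with hle | hgt
      · have hco : ∀ r ∈ Finset.Ioc 0 n, ((if r = D then 1 else 0) +
            (if n + a r = D then 1 else 0) + (if n + a r + r = D then (1:ℕ) else 0)) =
            (if r = D then 1 else 0) := by
          intro r hr
          rw [Finset.mem_Ioc] at hr
          have ha := hrange r (by omega) hr.2
          rw [if_neg (show ¬(n + a r = D) by omega),
            if_neg (show ¬(n + a r + r = D) by omega), add_zero, add_zero]
        rw [Finset.sum_congr rfl hco, Finset.sum_ite_eq' _ D (fun _ => 1),
          if_pos (Finset.mem_Ioc.2 ⟨by omega, hle⟩)]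
      · have hco : ∀ r ∈ Finset.Ioc 0 n, ((if r = D then 1 else 0) +
            (if n + a r = D then 1 else 0) + (if n + a r + r = D then (1:ℕ) else 0)) =
            ((if a r = D - n then 1 else 0) + (if a r + r = D - n then 1 else 0)) := by
          intro r hr
          rw [Finset.mem_Ioc] at hr
          have ha := hrange r (by omega) hr.2
          rw [if_neg (show ¬(r = D) by omega),
            if_congr (show (n + a r = D) ↔ (a r = D - n) by omega) rfl rfl,
            if_congr (show (n + a r + r = D) ↔ (a r + r = D - n) by omega) rfl rfl, zero_add]
        rw [Finset.sum_congr rfl hco]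
        exact pair_count n a hrange hinj1 hinj2 hdisj (D - n) (by omega) (by omega)
    rw [hsum1]
    norm_num
  · -- blocks repeated twice : n - i
    show (((Finset.Icc 1 (3*n)).image (fun j => BF v n i a j)).filter
        (fun B => ((Finset.Icc 1 (3*n)).filter (fun j => BF v n i a j = B)).card = 2)).card = n - i
    rw [hmain2, Finset.card_image_of_injOn, Nat.card_Icc]
    · omega
    · intro s hs t ht h
      simp only [Finset.coe_Icc, Set.mem_Icc] at hs ht
      exact hinjBF s t (by omega) (by omega) (by omega) (by omega) h
  · -- blocks repeated three times : i
    show (((Finset.Icc 1 (3*n)).image (fun j => BF v n i a j)).filter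
        (fun B => ((Finset.Icc 1 (3*n)).filter (fun j => BF v n i a j = B)).card = 3)).card = i
    rw [hmain3, Finset.card_image_of_injOn, Nat.card_Icc]
    · omega
    · intro s hs t ht h
      simp only [Finset.coe_Icc, Set.mem_Icc] at hs ht
      exact hinjBF s t (by omega) (by omega) (by omega) (by omega) h
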